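/- arXiv:hep-th/9601056 — 2 statements merged into one kernel-verified Lean document; each statement's English description precedes it below -/
import Mathlib

section
/- Let t ≠ 0 be complex, r a positive natural number, and define ε⁺_{r,s}(t,q) = ∏_{n=1}^{r} ((s-rt)/(2t) + q/t - 1/2 + n). If ε⁺_{r,s}(t,q) = 0, then there exists a half-odd-integer k = m - 1/2 with m ∈ {1, ..., r} (so 1/2 ≤ k ≤ r - 1/2) such that h_{r,s}(t,q) = h⁺_k(t,q), where h_{r,s}(t,q) = (s-rt)²/(8t) - q²/(2t) - t/8 and h⁺_k(t,q) = kq + (t/2)(k²-1/4). -/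
/-! A vanishing factor of `ε⁺_{r,s}` pins `s - r t` down to `-2 (t k + q)` with `k = m - 1/2`;
substituting this into `h_{r,s}` and completing the square gives `h⁺_k`. -/

theorem sq_div_sub_eq_of_div_add_eq_zero {K : Type*} [Field K] [CharZero K] {t a q k : K}
    (ht : t ≠ 0) (h : a / (2 * t) + q / t + k = 0) :
    a ^ 2 / (8 * t) - q ^ 2 / (2 * t) - t / 8 = k * q + t / 2 * (k ^ 2 - 1 / 4) := by
  have ha : a = -2 * (t * k + q) := by
    field_simp at h
    linear_combination h
  subst ha
  field_simp
  ring

theorem stmt_11_general (t : ℂ) (ht : t ≠ 0) (r : ℕ) (s q : ℂ)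
    (hε : ∏ n ∈ Finset.Icc 1 r,
        ((s - (r : ℂ)*t)/(2*t) + q/t - 1/2 + (n : ℂ)) = 0) :
    ∃ m ∈ Finset.Icc 1 r,
      (s - (r : ℂ)*t)^2 / (8*t) - q^2 / (2*t) - t/8
        = ((m : ℂ) - 1/2) * q + (t/2) * (((m : ℂ) - 1/2)^2 - 1/4) := by
  obtain ⟨m, hm, hfactor⟩ := Finset.prod_eq_zero_iff.mp hε
  refine ⟨m, hm, sq_div_sub_eq_of_div_add_eq_zero ht ?_⟩
  linear_combination hfactor

theorem stmt_11 (t : ℂ) (ht : t ≠ 0) (r : ℕ) (hr : 1 ≤ r) (s q : ℂ)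
    (hε : ∏ n ∈ Finset.Icc 1 r,
        ((s - (r : ℂ)*t)/(2*t) + q/t - 1/2 + (n : ℂ)) = 0) :
    ∃ m ∈ Finset.Icc 1 r,
      (s - (r : ℂ)*t)^2 / (8*t) - q^2 / (2*t) - t/8
        = ((m : ℂ) - 1/2) * q + (t/2) * (((m : ℂ) - 1/2)^2 - 1/4) :=
  stmt_11_general t ht r s q hε
end

section
/- Let t ≠ 0 be complex, r a positive natural number, and define ε⁻_{r,s}(t,q) = ∏_{n=1}^{r} (-(s-rt)/(2t) + q/t + 1/2 - n). If ε⁻_{r,s}(t,q) = 0, then there exists a half-odd-integer k = m - 1/2 with m ∈ {1, ..., r} such that h_{r,s}(t,q) = h⁻_k(t,q), where h_{r,s}(t,q) = (s-rt)²/(8t) - q²/(2t) - t/8 and h⁻_k(t,q) = -kq + (t/2)(k²-1/4). -/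
theorem stmt_12 (t : ℂ) (ht : t ≠ 0) (r : ℕ) (hr : 1 ≤ r) (s q : ℂ)
    (hε : ∏ n ∈ Finset.Icc 1 r,
        (-(s - (r : ℂ)*t)/(2*t) + q/t + 1/2 - (n : ℂ)) = 0) :
    ∃ m ∈ Finset.Icc 1 r,
      (s - (r : ℂ)*t)^2 / (8*t) - q^2 / (2*t) - t/8
        = -((m : ℂ) - 1/2) * q + (t/2) * (((m : ℂ) - 1/2)^2 - 1/4) := by
  obtain ⟨m, hm, h0⟩ := Finset.prod_eq_zero_iff.mp hε
  refine ⟨m, hm, ?_⟩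
  field_simp at h0
  have h1 : t * (s - ((r:ℂ)*t + 2*q + t - 2*(m:ℂ)*t)) = 0 := by
    linear_combination (-t) * h0
  have hs : s = (r:ℂ)*t + 2*q + t - 2*(m:ℂ)*t := by
    rcases mul_eq_zero.mp h1 with h | h
    · exact absurd h ht
    · exact sub_eq_zero.mp h
  subst hs
  field_simp
  ring
end
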